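/- Let n ≥ 3 and A₁, A₂, A₃ be real symmetric n×n matrices with s₁A₁ + s₂A₂ + s₃A₃ positive definite for some s ∈ ℝ³. Then the set {(xᵀA₁x, xᵀA₂x, xᵀA₃x) : x ∈ ℝⁿ} is closed in ℝ³. -/

import Mathlib

/-!
The map `Q x = (xᵀ Aₖ x)ₖ` is proper. Indeed, composing `Q` with the linear functional
`y ↦ ∑ sₖ yₖ` gives the positive definite form `xᵀ (∑ sₖ Aₖ) x ≥ c ‖x‖²`; since that functional
is bounded above on a compact set `K`, the closed set `Q⁻¹' K` is bounded, hence compact.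
A proper map is closed, so its range, the joint numerical range, is closed.
-/

open Matrix Bornology

namespace Matrix

variable {ι : Type*} [Fintype ι]

theorem continuous_dotProduct_mulVec_self (A : Matrix ι ι ℝ) :
    Continuous fun x : ι → ℝ => x ⬝ᵥ A *ᵥ x := by
  simp only [dotProduct, mulVec]
  fun_prop

theorem smul_dotProduct_mulVec_smul (A : Matrix ι ι ℝ) (a : ℝ) (x : ι → ℝ) :
    (a • x) ⬝ᵥ A *ᵥ (a • x) = a ^ 2 * (x ⬝ᵥ A *ᵥ x) := by
  simp only [mulVec_smul, smul_dotProduct, dotProduct_smul, smul_eq_mul]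
  ring

theorem dotProduct_sum_smul_mulVec {κ : Type*} (t : Finset κ) (s : κ → ℝ)
    (A : κ → Matrix ι ι ℝ) (x : ι → ℝ) :
    x ⬝ᵥ (∑ k ∈ t, s k • A k) *ᵥ x = ∑ k ∈ t, s k * (x ⬝ᵥ A k *ᵥ x) := by
  simp only [sum_mulVec, dotProduct_sum, smul_mulVec, dotProduct_smul, smul_eq_mul]

namespace PosDef

theorem exists_pos_mul_sq_norm_le {B : Matrix ι ι ℝ} (hB : B.PosDef) :
    ∃ c > 0, ∀ x : ι → ℝ, c * ‖x‖ ^ 2 ≤ x ⬝ᵥ B *ᵥ x := by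
  cases isEmpty_or_nonempty ι
  · exact ⟨1, one_pos, fun x => by simp [Subsingleton.elim x 0]⟩
  obtain ⟨z, hz, hmin⟩ := (isCompact_sphere (0 : ι → ℝ) 1).exists_isMinOn
    (NormedSpace.sphere_nonempty.2 zero_le_one) (continuous_dotProduct_mulVec_self B).continuousOn
  have hz0 : z ≠ 0 := ne_zero_of_mem_unit_sphere ⟨z, hz⟩
  refine ⟨z ⬝ᵥ B *ᵥ z, hB.dotProduct_mulVec_pos hz0, fun x => ?_⟩
  rcases eq_or_ne x 0 with rfl | hx
  · simp
  have hnx : 0 < ‖x‖ := norm_pos_iff.2 hx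
  have hle : z ⬝ᵥ B *ᵥ z ≤ ‖x‖⁻¹ ^ 2 * (x ⬝ᵥ B *ᵥ x) := by
    rw [← smul_dotProduct_mulVec_smul]
    exact hmin (by simp [norm_smul, hnx.ne'])
  calc z ⬝ᵥ B *ᵥ z * ‖x‖ ^ 2 ≤ ‖x‖⁻¹ ^ 2 * (x ⬝ᵥ B *ᵥ x) * ‖x‖ ^ 2 := by gcongr
    _ = x ⬝ᵥ B *ᵥ x := by field_simp

theorem isBounded_setOf_dotProduct_mulVec_le {B : Matrix ι ι ℝ} (hB : B.PosDef) (M : ℝ) :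
    IsBounded {x : ι → ℝ | x ⬝ᵥ B *ᵥ x ≤ M} := by
  obtain ⟨c, hc, hcoer⟩ := hB.exists_pos_mul_sq_norm_le
  refine (Metric.isBounded_iff_subset_closedBall 0).2 ⟨√(M / c), fun x hx => ?_⟩
  rw [mem_closedBall_zero_iff, ← Real.sqrt_sq (norm_nonneg x)]
  exact Real.sqrt_le_sqrt ((le_div_iff₀' hc).2 ((hcoer x).trans hx))

end PosDef

theorem isClosed_range_dotProduct_mulVec_self {κ : Type*} [Fintype κ] (A : κ → Matrix ι ι ℝ)
    (s : κ → ℝ) (hs : (∑ k, s k • A k).PosDef) :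
    IsClosed (Set.range fun (x : ι → ℝ) k => x ⬝ᵥ A k *ᵥ x) := by
  set Q : (ι → ℝ) → κ → ℝ := fun x k => x ⬝ᵥ A k *ᵥ x
  have hQ : Continuous Q := continuous_pi fun k => continuous_dotProduct_mulVec_self (A k)
  refine (isProperMap_iff_isCompact_preimage.2 ⟨hQ, fun K hK => ?_⟩).isClosedMap.isClosed_range
  have hℓ : Continuous fun y : κ → ℝ => ∑ k, s k * y k := by fun_prop
  obtain ⟨M, hM⟩ := hK.bddAbove_image hℓ.continuousOn
  refine Metric.isCompact_of_isClosed_isBounded (hK.isClosed.preimage hQ)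
    ((hs.isBounded_setOf_dotProduct_mulVec_le M).subset fun x hx => ?_)
  rw [Set.mem_ofPred_eq, dotProduct_sum_smul_mulVec]
  exact hM ⟨Q x, hx, rfl⟩

end Matrix

theorem polyak_closedness (n : ℕ)
    (A₁ A₂ A₃ : Matrix (Fin n) (Fin n) ℝ)
    (hs : ∃ s : Fin 3 → ℝ, (s 0 • A₁ + s 1 • A₂ + s 2 • A₃).PosDef) :
    IsClosed {y : Fin 3 → ℝ | ∃ x : Fin n → ℝ,
        y = ![x ⬝ᵥ A₁ *ᵥ x, x ⬝ᵥ A₂ *ᵥ x, x ⬝ᵥ A₃ *ᵥ x]} := by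
  obtain ⟨s, hB⟩ := hs
  have hrange : {y : Fin 3 → ℝ | ∃ x : Fin n → ℝ,
      y = ![x ⬝ᵥ A₁ *ᵥ x, x ⬝ᵥ A₂ *ᵥ x, x ⬝ᵥ A₃ *ᵥ x]} =
      Set.range fun (x : Fin n → ℝ) k => x ⬝ᵥ ![A₁, A₂, A₃] k *ᵥ x := by
    ext y
    constructor <;> rintro ⟨x, rfl⟩ <;> exact ⟨x, by ext k; fin_cases k <;> rfl⟩
  rw [hrange]
  exact isClosed_range_dotProduct_mulVec_self _ s (by simpa [Fin.sum_univ_three] using hB)
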